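/- arXiv:1508.02570 — 3 statements merged into one kernel-verified Lean document; each statement's English description precedes it below -/
import Mathlib

section
/- For every sequence X of length v over an alphabet of size m, writing v = qm + r with 0 ≤ r < m by division, the maximum out-of-phase Hamming autocorrelation satisfies H(X) ≥ (v−r)(v+r−m)/(m(v−1)). Here H(X) = max over 1 ≤ τ < v of H_{X,X}(τ), where H_{X,Y}(τ) = |{i ∈ {0,…,v−1} : x_i = y_{(i+τ) mod v}}|. -/
/-!
Summing the autocorrelation over all shifts counts the pairs `(i, j)` with `X i = X j`, so
`∑_τ H(τ) = ∑_f N_f²`, where `N_f` is the number of occurrences of the letter `f`. Removing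
`H(0) = v` and comparing with the largest of the `v - 1` remaining terms gives a shift `τ ≠ 0` with
`(v - 1) H(τ) ≥ ∑_f N_f² - v`. Since `(N_f - q)(N_f - q - 1) ≥ 0` for integers,
`∑_f N_f² ≥ (2q + 1) v - q(q + 1) m`, and for `v = qm + r` the resulting lower bound
`2qv - q(q + 1)m` of `(v - 1) H(τ)` is exactly `(v - r)(v + r - m) / m`.
-/

open Finset

lemma Int.mul_sub_one_nonneg (k : ℤ) : 0 ≤ k * (k - 1) := by
  rcases le_or_gt k 0 with h | h <;> nlinarith

lemma Finset.two_mul_add_one_mul_sum_sub_le_sum_sq {ι : Type*} (s : Finset ι) (N : ι → ℤ)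
    (q : ℤ) : (2 * q + 1) * ∑ i ∈ s, N i - q * (q + 1) * #s ≤ ∑ i ∈ s, N i ^ 2 := by
  have key : 0 ≤ ∑ i ∈ s, (N i - q) * (N i - q - 1) :=
    sum_nonneg fun i _ => by simpa [sub_sub] using Int.mul_sub_one_nonneg (N i - q)
  have expand : ∑ i ∈ s, (N i - q) * (N i - q - 1)
      = ∑ i ∈ s, N i ^ 2 - (2 * q + 1) * ∑ i ∈ s, N i + q * (q + 1) * #s := by
    calc _ = ∑ i ∈ s, (N i ^ 2 - (2 * q + 1) * N i + q * (q + 1)) :=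
          sum_congr rfl fun _ _ => by ring
      _ = _ := by rw [sum_add_distrib, sum_sub_distrib, ← mul_sum, sum_const, nsmul_eq_mul]; ring
  linarith

lemma Finset.exists_mem_sum_le_card_mul {ι : Type*} (s : Finset ι) (hs : s.Nonempty)
    (H : ι → ℕ) : ∃ τ ∈ s, ∑ σ ∈ s, H σ ≤ #s * H τ := by
  obtain ⟨τ, hτ, hmax⟩ := exists_max_image s H hs
  exact ⟨τ, hτ, by simpa using sum_le_card_nsmul s H (H τ) hmax⟩

section HammingAutocorrelation

variable {G F : Type*} [AddGroup G] [Fintype G] [DecidableEq F]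

def hammingAutocorrelation (X : G → F) (τ : G) : ℕ := #{i | X i = X (i + τ)}

@[simp]
lemma hammingAutocorrelation_zero (X : G → F) :
    hammingAutocorrelation X 0 = Fintype.card G := by
  simp [hammingAutocorrelation]

lemma card_filter_eq_apply_add (X : G → F) (i : G) :
    #{τ | X i = X (i + τ)} = #{j | X j = X i} :=
  card_equiv (Equiv.addLeft i) fun τ => by simp [eq_comm]

lemma sum_hammingAutocorrelation [Fintype F] (X : G → F) :
    ∑ τ, hammingAutocorrelation X τ = ∑ f, #{i | X i = f} ^ 2 := calc
  ∑ τ, hammingAutocorrelation X τ = ∑ i, #{τ | X i = X (i + τ)} := by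
    simp only [hammingAutocorrelation, card_filter]
    exact sum_comm
  _ = ∑ f, ∑ i with X i = f, #{j | X j = X i} := by
    simp only [card_filter_eq_apply_add, sum_fiberwise]
  _ = ∑ f, #{i | X i = f} ^ 2 := by
    refine sum_congr rfl fun f _ => ?_
    rw [sum_congr rfl fun i hi => by rw [(mem_filter.1 hi).2], sum_const, smul_eq_mul, sq]

theorem exists_ne_zero_hammingAutocorrelation_ge [Nontrivial G] [Fintype F] (X : G → F)
    (q : ℤ) : ∃ τ ≠ 0, 2 * q * Fintype.card G - q * (q + 1) * Fintype.card F
      ≤ ((Fintype.card G : ℤ) - 1) * hammingAutocorrelation X τ := by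
  classical
  obtain ⟨τ, hτ, hle⟩ := (univ.erase (0 : G)).exists_mem_sum_le_card_mul
    univ_nontrivial.erase_nonempty (hammingAutocorrelation X)
  have hsplit := add_sum_erase univ (hammingAutocorrelation X) (mem_univ 0)
  rw [sum_hammingAutocorrelation, hammingAutocorrelation_zero] at hsplit
  rw [card_erase_of_mem (mem_univ _), card_univ] at hle
  have hfibers : ∑ f, (#{i | X i = f} : ℤ) = Fintype.card G := by
    exact_mod_cast (card_eq_sum_card_fiberwise fun i _ => mem_univ (X i)).symm
  have hconv := two_mul_add_one_mul_sum_sub_le_sum_sq univ (fun f => (#{i | X i = f} : ℤ)) q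
  rw [hfibers, card_univ] at hconv
  have hG : 1 ≤ Fintype.card G := Fintype.card_pos
  refine ⟨τ, ne_of_mem_erase hτ, ?_⟩
  zify [hG] at hsplit hle
  linarith

end HammingAutocorrelation
/-- Lempel–Greenberger bound I: for every sequence `X` of length `v` over an
alphabet of size `m`, with `r = v % m`, the maximum out-of-phase Hamming
autocorrelation satisfies `H(X) ≥ (v-r)(v+r-m)/(m(v-1))`. -/
theorem stmt_0 (v m : ℕ) [NeZero v] (hv : 2 ≤ v) (hm : 1 ≤ m)
    (F : Type) [Fintype F] [DecidableEq F] (hF : Fintype.card F = m)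
    (X : ZMod v → F) :
    ∃ τ : ZMod v, τ ≠ 0 ∧
      ((v : ℝ) - (v % m : ℕ)) * ((v : ℝ) + (v % m : ℕ) - m) / ((m : ℝ) * ((v : ℝ) - 1))
        ≤ ((Finset.univ.filter fun i : ZMod v => X i = X (i + τ)).card : ℝ) := by
  have : Fact (1 < v) := ⟨hv⟩
  set q := v / m
  set r := v % m
  obtain ⟨τ, hτ, hbound⟩ := exists_ne_zero_hammingAutocorrelation_ge X q
  rw [ZMod.card, hF] at hbound
  have hbound : 2 * q * (v : ℝ) - q * (q + 1) * m ≤ ((v : ℝ) - 1) * hammingAutocorrelation X τ := by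
    exact_mod_cast hbound
  have hv_eq : (m : ℝ) * q + r = v := by exact_mod_cast Nat.div_add_mod v m
  have hv1 : (1 : ℝ) < v := by exact_mod_cast hv
  refine ⟨τ, hτ, ?_⟩
  rw [div_le_iff₀ (by positivity)]
  calc ((v : ℝ) - r) * (v + r - m) = m * (2 * q * v - q * (q + 1) * m) := by rw [← hv_eq]; ring
    _ ≤ m * ((v - 1) * hammingAutocorrelation X τ) := by gcongr
    _ = _ := by rw [hammingAutocorrelation]; ring
end

section
/- Let S be a set of k sequences of length v over an alphabet of size m, and let I = ⌊vk/m⌋. Then the maximum Hamming correlation of S satisfies H_m(S) ≥ ⌈(2Ivk − (I+1)Im) / ((vk−1)k)⌉, where H_m(S) is the maximum over all out-of-phase autocorrelations H_{X,X}(τ) (1 ≤ τ < v, X ∈ S) and all cross-correlations H_{X,Y}(τ) (0 ≤ τ < v, X ≠ Y in S). -/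
/-!
Summing the Hamming correlation over all shifts turns it into a count of equal letter pairs, so
the total correlation `∑_{X,Y ∈ S} ∑_τ H_{X,Y}(τ)` equals `∑_f n_f²`, where `n_f` is the number of
occurrences of the letter `f` in all of `S` and `∑_f n_f = vk`. Since `n² ≥ (2I+1)n - I(I+1)` for
all integers `n`, this is at least `(2I+1)vk - I(I+1)m`. The `k` in-phase autocorrelations
contribute exactly `vk`, and the remaining `(vk-1)k` terms are each at most `H_m(S)`.
-/

open Finset

/-- The chord of `x ↦ x²` through the consecutive integers `I` and `I + 1` stays below it at
every integer. -/
theorem Int.chord_le_sq (n I : ℤ) : (2 * I + 1) * n - I * (I + 1) ≤ n ^ 2 := by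
  rcases le_or_gt n I with h | h <;> nlinarith

namespace FrequencyHopping

variable {G F : Type*} [Fintype G] [DecidableEq F]

def hammingCorrelation [Add G] (X Y : G → F) (τ : G) : ℕ :=
  #{i | X i = Y (i + τ)}

def totalCorrelation [Add G] (S : Finset (G → F)) : ℕ :=
  ∑ X ∈ S, ∑ Y ∈ S, ∑ τ, hammingCorrelation X Y τ

theorem hammingCorrelation_self_zero [AddZeroClass G] (X : G → F) :
    hammingCorrelation X X 0 = Fintype.card G := by
  simp [hammingCorrelation]

theorem sum_hammingCorrelation [AddGroup G] [Fintype F] (X Y : G → F) :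
    ∑ τ, hammingCorrelation X Y τ = ∑ f, #{i | X i = f} * #{i | Y i = f} := by
  calc ∑ τ, hammingCorrelation X Y τ
      = ∑ i, ∑ τ, if X i = Y (i + τ) then 1 else 0 := by
        simp only [hammingCorrelation, card_filter]
        exact sum_comm
    _ = ∑ i, #{j | X i = Y j} := by
        refine sum_congr rfl fun i _ => ?_
        rw [card_filter]
        exact Equiv.sum_comp (Equiv.addLeft i) fun j => if X i = Y j then 1 else 0
    _ = ∑ f, #{i | X i = f} * #{i | Y i = f} := by
        rw [← sum_fiberwise' univ X fun f => #{j | f = Y j}]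
        simp only [sum_const, smul_eq_mul, @eq_comm F _ (Y _)]

theorem totalCorrelation_eq_sum_sq [AddGroup G] [Fintype F] (S : Finset (G → F)) :
    totalCorrelation S = ∑ f, (∑ X ∈ S, #{i | X i = f}) ^ 2 := by
  simp only [totalCorrelation, sum_hammingCorrelation, sq, sum_mul_sum]
  exact (sum_congr rfl fun X _ => sum_comm).trans sum_comm

theorem sum_sum_card_fiber [Fintype F] (S : Finset (G → F)) :
    ∑ f, ∑ X ∈ S, #{i | X i = f} = #S * Fintype.card G := by
  rw [sum_comm, ← smul_eq_mul, ← sum_const]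
  exact sum_congr rfl fun X _ => (card_eq_sum_card_fiberwise fun i _ => mem_univ (X i)).symm

theorem le_totalCorrelation [AddGroup G] [Fintype F] (S : Finset (G → F)) (I : ℤ) :
    (2 * I + 1) * (#S * Fintype.card G) - I * (I + 1) * Fintype.card F
      ≤ (totalCorrelation S : ℤ) := by
  set n : F → ℤ := fun f => ∑ X ∈ S, #{i | X i = f}
  have hn : ∑ f, n f = #S * Fintype.card G := by
    simp only [n]
    exact_mod_cast sum_sum_card_fiber S
  calc _ = ∑ f, ((2 * I + 1) * n f - I * (I + 1)) := by
        rw [sum_sub_distrib, ← mul_sum, hn, sum_const, card_univ, nsmul_eq_mul]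
        ring
    _ ≤ ∑ f, n f ^ 2 := sum_le_sum fun f _ => Int.chord_le_sq _ _
    _ = totalCorrelation S := by
        rw [totalCorrelation_eq_sum_sq]
        push_cast [n]
        rfl

theorem totalCorrelation_le [AddZeroClass G] [DecidableEq G] (S : Finset (G → F)) (M : ℤ)
    (hM : ∀ X ∈ S, ∀ Y ∈ S, ∀ τ, (X ≠ Y ∨ τ ≠ 0) → (hammingCorrelation X Y τ : ℤ) ≤ M) :
    (totalCorrelation S : ℤ) ≤ #S * (Fintype.card G + (#S * Fintype.card G - 1) * M) := by
  rw [totalCorrelation, ← nsmul_eq_mul]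
  push_cast
  refine sum_le_card_nsmul _ _ _ fun X hX => ?_
  have hself : ∑ τ ∈ univ.erase 0, (hammingCorrelation X X τ : ℤ)
      ≤ ∑ _τ ∈ univ.erase (0 : G), M :=
    sum_le_sum fun τ hτ => hM X hX X hX τ (.inr (ne_of_mem_erase hτ))
  have hcross : ∑ Y ∈ S.erase X, ∑ τ, (hammingCorrelation X Y τ : ℤ)
      ≤ ∑ _Y ∈ S.erase X, ∑ _τ : G, M :=
    sum_le_sum fun Y hY => sum_le_sum fun τ _ =>
      hM X hX Y (mem_of_mem_erase hY) τ (.inl (ne_of_mem_erase hY).symm)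
  simp only [sum_const, nsmul_eq_mul, cast_card_erase_of_mem hX,
    cast_card_erase_of_mem (mem_univ _), card_univ] at hself hcross
  rw [← add_sum_erase _ _ hX, ← add_sum_erase _ _ (mem_univ 0), hammingCorrelation_self_zero]
  linear_combination hself + hcross

end FrequencyHopping

open FrequencyHopping in
theorem stmt_1_general (v k m : ℕ) [NeZero v] (hv : 2 ≤ v) (hk : 1 ≤ k)
    (F : Type) [Fintype F] [DecidableEq F] (hF : Fintype.card F = m)
    (S : Finset (ZMod v → F)) (hS : S.card = k) :
    ∃ X ∈ S, ∃ Y ∈ S, ∃ τ : ZMod v, (X ≠ Y ∨ τ ≠ 0) ∧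
      (⌈((2 * (v * k / m : ℕ) * v * k : ℚ) - (((v * k / m : ℕ) + 1) * (v * k / m : ℕ) * m : ℚ))
          / (((v * k : ℚ) - 1) * k)⌉ : ℤ)
        ≤ ((Finset.univ.filter fun i : ZMod v => X i = Y (i + τ)).card : ℤ) := by
  set I : ℕ := v * k / m
  set q : ℚ := (2 * I * v * k - (I + 1) * I * m) / ((v * k - 1) * k)
  by_contra! h
  have hupper := totalCorrelation_le S (⌈q⌉ - 1) fun X hX Y hY τ hXY =>
    Int.le_sub_one_of_lt (h X hX Y hY τ hXY)
  have hlower := le_totalCorrelation S I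
  simp only [hS, ZMod.card, hF] at hupper hlower
  have hden : (0 : ℚ) < (v * k - 1) * k := by
    have : (2 : ℚ) ≤ v * k := by exact_mod_cast (by nlinarith : 2 ≤ v * k)
    have : (1 : ℚ) ≤ k := by exact_mod_cast hk
    nlinarith
  have hq : q ≤ ⌈q⌉ - 1 := by
    rw [div_le_iff₀ hden]
    have := (Int.cast_le (R := ℚ)).mpr (hlower.trans hupper)
    push_cast at this
    linarith
  linarith [Int.ceil_lt_add_one q]

/-- Peng–Fan bound: for a set `S` of `k` sequences of length `v` over an alphabet
of size `m`, with `I = ⌊vk/m⌋`, the maximum Hamming correlation satisfies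
`H_m(S) ≥ ⌈(2Ivk - (I+1)Im)/((vk-1)k)⌉`. -/
theorem stmt_1 (v k m : ℕ) [NeZero v] (hv : 2 ≤ v) (hk : 1 ≤ k) (hm : 1 ≤ m)
    (F : Type) [Fintype F] [DecidableEq F] (hF : Fintype.card F = m)
    (S : Finset (ZMod v → F)) (hS : S.card = k) :
    ∃ X ∈ S, ∃ Y ∈ S, ∃ τ : ZMod v, (X ≠ Y ∨ τ ≠ 0) ∧
      (⌈((2 * (v * k / m : ℕ) * v * k : ℚ) - (((v * k / m : ℕ) + 1) * (v * k / m : ℕ) * m : ℚ))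
          / (((v * k : ℚ) - 1) * k)⌉ : ℤ)
        ≤ ((Finset.univ.filter fun i : ZMod v => X i = Y (i + τ)).card : ℤ) :=
  stmt_1_general v k m hv hk F hF S hS
end

section
/- Suppose S is a code of length v over an alphabet of size m with minimum Hamming distance d satisfying d > v(1 − 1/w²) for some integer w ≥ 1. Then S is a (w, 1 − 1/w)-cover-free code: for every subset S' ⊆ S of size w and every codeword Z ∈ S \ S', the set I(Z,S') = {i : z_i = y_i for some Y ∈ S'} satisfies |I(Z,S')| < v/w. -/
/-!
Two distinct codewords agree in at most `v - d < v / w²` coordinates. A coordinate where `Z`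
agrees with some member of `S'` is a coordinate where it agrees with a particular one, so by the
union bound over the `w` members of `S'` there are fewer than `w · v / w² = v / w` of them.
-/

open Finset

section Agreement

variable {ι F : Type*} [Fintype ι] [DecidableEq F]

theorem card_agree_add_hammingDist (X Y : ι → F) :
    #{i | X i = Y i} + hammingDist X Y = Fintype.card ι :=
  card_filter_add_card_filter_not _

theorem card_agree_lt_of_lt_hammingDist {X Y : ι → F} {d : ℕ} {w : ℝ}
    (hdist : d ≤ hammingDist X Y) (hd : (Fintype.card ι : ℝ) * (1 - 1 / w ^ 2) < d) :
    (#{i | X i = Y i} : ℝ) < Fintype.card ι / w ^ 2 := by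
  have hsum : (#{i | X i = Y i} : ℝ) + hammingDist X Y = Fintype.card ι := by
    exact_mod_cast card_agree_add_hammingDist X Y
  have hdist' : (d : ℝ) ≤ hammingDist X Y := by exact_mod_cast hdist
  have hsplit : (Fintype.card ι : ℝ) / w ^ 2 =
      Fintype.card ι - Fintype.card ι * (1 - 1 / w ^ 2) := by ring
  linarith

theorem card_agree_some_le_sum [DecidableEq ι] (Z : ι → F) (T : Finset (ι → F)) :
    #{i | ∃ Y ∈ T, Z i = Y i} ≤ ∑ Y ∈ T, #{i | Z i = Y i} := by
  refine (card_le_card fun i hi => ?_).trans card_biUnion_le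
  simpa using hi

end Agreement

theorem stmt_3_general (v w d : ℕ) (hw : 1 ≤ w) (F : Type) [DecidableEq F]
    (S : Finset (Fin v → F))
    (hd : ∀ X ∈ S, ∀ Y ∈ S, X ≠ Y →
        d ≤ (Finset.univ.filter fun i : Fin v => X i ≠ Y i).card)
    (hdv : (v : ℝ) * (1 - 1 / (w : ℝ) ^ 2) < d) :
    ∀ S' ⊆ S, S'.card = w → ∀ Z ∈ S \ S',
      ((Finset.univ.filter fun i : Fin v => ∃ Y ∈ S', Z i = Y i).card : ℝ) < (v : ℝ) / w := by
  intro S' hS' hcard Z hZ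
  obtain ⟨hZS, hZS'⟩ := mem_sdiff.mp hZ
  rw [← Fintype.card_fin v] at hdv
  have hagree : ∀ Y ∈ S', (#{i | Z i = Y i} : ℝ) < v / (w : ℝ) ^ 2 := fun Y hY => by
    have hZY : Z ≠ Y := fun h => hZS' (h ▸ hY)
    simpa using card_agree_lt_of_lt_hammingDist (hd Z hZS Y (hS' hY) hZY) hdv
  calc (#{i | ∃ Y ∈ S', Z i = Y i} : ℝ)
      ≤ ∑ Y ∈ S', (#{i | Z i = Y i} : ℝ) := by exact_mod_cast card_agree_some_le_sum Z S'
    _ < ∑ _Y ∈ S', (v : ℝ) / (w : ℝ) ^ 2 := sum_lt_sum_of_nonempty (card_pos.mp (by omega)) hagree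
    _ = v / w := by
      have hw0 : (w : ℝ) ≠ 0 := by positivity
      rw [sum_const, hcard, nsmul_eq_mul]
      field_simp

/-- A code with minimum distance `d > v(1 - 1/w²)` is a `(w, 1 - 1/w)`-cover-free
code: any codeword agrees with some member of any `w`-subset in fewer than `v/w`
coordinates. -/
theorem stmt_3 (v w d : ℕ) (hv : 1 ≤ v) (hw : 1 ≤ w) (F : Type) [DecidableEq F]
    (S : Finset (Fin v → F))
    (hd : ∀ X ∈ S, ∀ Y ∈ S, X ≠ Y →
        d ≤ (Finset.univ.filter fun i : Fin v => X i ≠ Y i).card)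
    (hdv : (v : ℝ) * (1 - 1 / (w : ℝ) ^ 2) < d) :
    ∀ S' ⊆ S, S'.card = w → ∀ Z ∈ S \ S',
      ((Finset.univ.filter fun i : Fin v => ∃ Y ∈ S', Z i = Y i).card : ℝ) < (v : ℝ) / w :=
  stmt_3_general v w d hw F S hd hdv
end
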